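/- Let Y = X + E be matrices in ℝ^{m×n} with rank(X) = r, and let U be the top r left singular vectors of Y. Then the Frobenius norm of (I - UUᵀ)X satisfies ‖(I−UUᵀ)X‖_F ≤ 2‖E‖_F, and also ‖(I−UUᵀ)X‖_F ≤ 2√r · ‖E‖ where ‖E‖ is the spectral norm. -/

import Mathlib

open Matrix

/-- Spectral (ℓ₂ operator) norm of a real matrix. -/
noncomputable def specNorm {α β : Type*} [Fintype α] [Fintype β] [DecidableEq β]
    (A : Matrix α β ℝ) : ℝ :=
  ‖LinearMap.toContinuousLinearMap (Matrix.toEuclideanLin A)‖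

/-- Frobenius norm of a real matrix. -/
noncomputable def frobNorm {α β : Type*} [Fintype α] [Fintype β] (A : Matrix α β ℝ) : ℝ :=
  Real.sqrt (∑ i, ∑ j, (A i j) ^ 2)


open Matrix Finset

namespace StmtTwo
variable {m n p q : ℕ}

noncomputable def fsq (A : Matrix (Fin m) (Fin n) ℝ) : ℝ := ∑ i, ∑ j, (A i j)^2

lemma fsq_nonneg (A : Matrix (Fin m) (Fin n) ℝ) : 0 ≤ fsq A := by
  refine Finset.sum_nonneg fun i _ => Finset.sum_nonneg fun j _ => sq_nonneg _

lemma fsq_eq_trace (A : Matrix (Fin m) (Fin n) ℝ) : fsq A = (Aᵀ * A).trace := by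
  unfold fsq Matrix.trace
  rw [Finset.sum_comm]
  refine Finset.sum_congr rfl fun j _ => ?_
  simp [Matrix.mul_apply, Matrix.diag, sq]

/-- Frobenius norm as Euclidean norm. -/
lemma frob_eq_norm (A : Matrix (Fin m) (Fin n) ℝ) :
    frobNorm A = ‖(WithLp.equiv 2 (Fin m × Fin n → ℝ)).symm (fun p => A p.1 p.2)‖ := by
  rw [EuclideanSpace.norm_eq, frobNorm]
  congr 1
  rw [Fintype.sum_prod_type]
  simp [sq_abs]

lemma frob_sqrt_fsq (A : Matrix (Fin m) (Fin n) ℝ) : frobNorm A = Real.sqrt (fsq A) := rfl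

lemma frob_nonneg (A : Matrix (Fin m) (Fin n) ℝ) : 0 ≤ frobNorm A := Real.sqrt_nonneg _

lemma frob_le_frob {A B : Matrix (Fin m) (Fin n) ℝ} (h : fsq A ≤ fsq B) :
    frobNorm A ≤ frobNorm B := Real.sqrt_le_sqrt h

lemma frob_add_le (A B : Matrix (Fin m) (Fin n) ℝ) :
    frobNorm (A + B) ≤ frobNorm A + frobNorm B := by
  rw [frob_eq_norm, frob_eq_norm, frob_eq_norm]
  have : ((WithLp.equiv 2 (Fin m × Fin n → ℝ)).symm (fun p => (A + B) p.1 p.2)) =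
      (WithLp.equiv 2 (Fin m × Fin n → ℝ)).symm (fun p => A p.1 p.2) +
      (WithLp.equiv 2 (Fin m × Fin n → ℝ)).symm (fun p => B p.1 p.2) := by
    ext p
    simp [WithLp.equiv_symm_apply]
  rw [this]
  exact norm_add_le _ _

lemma fsq_neg (A : Matrix (Fin m) (Fin n) ℝ) : fsq (-A) = fsq A := by
  unfold fsq; simp

lemma frob_sub_le (A B : Matrix (Fin m) (Fin n) ℝ) :
    frobNorm (A - B) ≤ frobNorm A + frobNorm B := by
  have := frob_add_le A (-B)
  rw [frob_sqrt_fsq (-B), fsq_neg, ← frob_sqrt_fsq] at this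
  simpa [sub_eq_add_neg] using this

end StmtTwo
namespace StmtTwo
variable {m n p q : ℕ}

lemma fsq_symIdem_mul_le (P : Matrix (Fin m) (Fin m) ℝ) (hPt : Pᵀ = P) (hPP : P * P = P)
    (M : Matrix (Fin m) (Fin n) ℝ) : fsq (P * M) ≤ fsq M := by
  have h1 : fsq (P * M) = (Mᵀ * (P * M)).trace := by
    rw [fsq_eq_trace, Matrix.transpose_mul, hPt, Matrix.mul_assoc, ← Matrix.mul_assoc P P M, hPP]
  have h2 : fsq ((1 - P) * M) = (Mᵀ * M).trace - (Mᵀ * (P * M)).trace := by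
    rw [fsq_eq_trace, Matrix.transpose_mul, Matrix.transpose_sub, Matrix.transpose_one, hPt]
    have : (Mᵀ * (1 - P)) * ((1 - P) * M) = Mᵀ * M - Mᵀ * (P * M) := by
      have e : (1 - P) * (1 - P) = 1 - P := by
        rw [Matrix.sub_mul, Matrix.mul_sub, Matrix.mul_sub, hPP]
        simp
      rw [Matrix.mul_assoc, ← Matrix.mul_assoc (1 - P) (1 - P) M, e, Matrix.sub_mul,
        Matrix.one_mul, Matrix.mul_sub]
    rw [this, Matrix.trace_sub]
  have h3 := fsq_nonneg ((1 - P) * M)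
  have h4 := fsq_eq_trace M
  linarith

lemma fsq_mul_orth (A : Matrix (Fin m) (Fin n) ℝ) (W : Matrix (Fin n) (Fin p) ℝ)
    (hW : W * Wᵀ = 1) : fsq (A * W) = fsq A := by
  rw [fsq_eq_trace, fsq_eq_trace, Matrix.transpose_mul, Matrix.mul_assoc,
    ← Matrix.mul_assoc Aᵀ A W, Matrix.trace_mul_comm, Matrix.mul_assoc, hW, Matrix.mul_one]

lemma fsq_orth_mul (W : Matrix (Fin p) (Fin m) ℝ) (hW : Wᵀ * W = 1)
    (A : Matrix (Fin m) (Fin n) ℝ) : fsq (W * A) = fsq A := by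
  rw [fsq_eq_trace, fsq_eq_trace, Matrix.transpose_mul, Matrix.mul_assoc,
    ← Matrix.mul_assoc Wᵀ W A, hW, Matrix.one_mul]

/-- column matrix -/
def colM (w : Fin m → ℝ) : Matrix (Fin m) (Fin 1) ℝ := fun i _ => w i

lemma fsq_colM (w : Fin m → ℝ) : fsq (colM w) = ∑ i, (w i)^2 := by
  unfold fsq colM; simp

lemma mul_colM (A : Matrix (Fin m) (Fin n) ℝ) (w : Fin n → ℝ) :
    A * colM w = colM (A *ᵥ w) := by
  ext i j
  simp [colM, Matrix.mul_apply, Matrix.mulVec, dotProduct]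

lemma symIdem_mulVec_sq_le (P : Matrix (Fin m) (Fin m) ℝ) (hPt : Pᵀ = P) (hPP : P * P = P)
    (w : Fin m → ℝ) : ∑ i, ((P *ᵥ w) i)^2 ≤ ∑ i, (w i)^2 := by
  have := fsq_symIdem_mul_le P hPt hPP (colM w)
  rwa [mul_colM, fsq_colM, fsq_colM] at this

lemma orth_mulVec_sq (W : Matrix (Fin p) (Fin m) ℝ) (hW : Wᵀ * W = 1) (w : Fin m → ℝ) :
    ∑ i, ((W *ᵥ w) i)^2 = ∑ i, (w i)^2 := by
  have := fsq_orth_mul W hW (colM w)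
  rwa [mul_colM, fsq_colM, fsq_colM] at this

end StmtTwo
namespace StmtTwo
variable {m n p q : ℕ}

noncomputable def ev (w : Fin m → ℝ) : EuclideanSpace ℝ (Fin m) :=
  (WithLp.equiv 2 (Fin m → ℝ)).symm w

lemma norm_ev (w : Fin m → ℝ) : ‖ev w‖ = Real.sqrt (∑ i, (w i)^2) := by
  rw [EuclideanSpace.norm_eq]
  congr 1
  refine Finset.sum_congr rfl fun i _ => ?_
  simp [ev, WithLp.equiv_symm_apply, sq_abs]

lemma spec_nonneg (A : Matrix (Fin m) (Fin n) ℝ) : 0 ≤ specNorm A := norm_nonneg _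

lemma mulVec_norm_le (A : Matrix (Fin m) (Fin n) ℝ) (v : Fin n → ℝ) :
    ‖ev (A *ᵥ v)‖ ≤ specNorm A * ‖ev v‖ := by
  have h := (LinearMap.toContinuousLinearMap (Matrix.toEuclideanLin A)).le_opNorm (ev v)
  have e : (LinearMap.toContinuousLinearMap (Matrix.toEuclideanLin A)) (ev v) = ev (A *ᵥ v) := by
    rw [LinearMap.coe_toContinuousLinearMap']
    exact Matrix.toEuclideanLin_apply_piLp_toLp A v
  rw [e] at h
  exact h

lemma specNorm_le_bound (A : Matrix (Fin m) (Fin n) ℝ) {c : ℝ} (hc : 0 ≤ c)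
    (h : ∀ v : Fin n → ℝ, ‖ev (A *ᵥ v)‖ ≤ c * ‖ev v‖) : specNorm A ≤ c := by
  refine ContinuousLinearMap.opNorm_le_bound _ hc fun x => ?_
  have := h ((WithLp.equiv 2 (Fin n → ℝ)) x)
  have e1 : ev ((WithLp.equiv 2 (Fin n → ℝ)) x) = x := Equiv.symm_apply_apply _ _
  rw [e1] at this
  have e2 : (LinearMap.toContinuousLinearMap (Matrix.toEuclideanLin A)) x
      = ev (A *ᵥ (WithLp.equiv 2 (Fin n → ℝ)) x) := by
    rw [LinearMap.coe_toContinuousLinearMap']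
    exact Matrix.toEuclideanLin_apply A x
  rw [e2]
  exact this

lemma spec_sub_le (A B : Matrix (Fin m) (Fin n) ℝ) :
    specNorm (A - B) ≤ specNorm A + specNorm B := by
  unfold specNorm
  rw [map_sub, map_sub]
  exact norm_sub_le _ _

lemma spec_zero : specNorm (0 : Matrix (Fin m) (Fin n) ℝ) = 0 := by
  unfold specNorm
  rw [map_zero, map_zero, norm_zero]

/-- `‖A*N‖_F ≤ ‖A‖₂ ‖N‖_F`. -/
lemma frob_mul_le_spec_mul_frob (A : Matrix (Fin m) (Fin n) ℝ) (N : Matrix (Fin n) (Fin p) ℝ) :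
    frobNorm (A * N) ≤ specNorm A * frobNorm N := by
  have key : fsq (A * N) ≤ (specNorm A)^2 * fsq N := by
    have h1 : fsq (A * N) = ∑ j, ∑ i, ((A *ᵥ (fun k => N k j)) i)^2 := by
      unfold fsq
      rw [Finset.sum_comm]
      refine Finset.sum_congr rfl fun j _ => Finset.sum_congr rfl fun i _ => ?_
      simp [Matrix.mul_apply, Matrix.mulVec, dotProduct]
    have h2 : fsq N = ∑ j, ∑ i, (N i j)^2 := by
      unfold fsq; rw [Finset.sum_comm]
    rw [h1, h2, Finset.mul_sum]
    refine Finset.sum_le_sum fun j _ => ?_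
    have hb := mulVec_norm_le A (fun k => N k j)
    rw [norm_ev, norm_ev] at hb
    have h3 : ∑ i, ((A *ᵥ (fun k => N k j)) i)^2
        = (Real.sqrt (∑ i, ((A *ᵥ (fun k => N k j)) i)^2))^2 := by
      rw [Real.sq_sqrt]
      exact Finset.sum_nonneg fun i _ => sq_nonneg _
    rw [h3]
    calc (Real.sqrt (∑ i, ((A *ᵥ (fun k => N k j)) i)^2))^2
        ≤ (specNorm A * Real.sqrt (∑ i, ((N i j))^2))^2 := by
          apply sq_le_sq' _ hb
          have := Real.sqrt_nonneg (∑ i, ((A *ᵥ (fun k => N k j)) i)^2)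
          have := mul_nonneg (spec_nonneg A) (Real.sqrt_nonneg (∑ i, ((N i j))^2))
          linarith
      _ = (specNorm A)^2 * ∑ i, (N i j)^2 := by
          rw [mul_pow, Real.sq_sqrt (Finset.sum_nonneg fun i _ => sq_nonneg _)]
  rw [frob_sqrt_fsq, frob_sqrt_fsq]
  calc Real.sqrt (fsq (A * N)) ≤ Real.sqrt ((specNorm A)^2 * fsq N) := Real.sqrt_le_sqrt key
    _ = specNorm A * Real.sqrt (fsq N) := by
        rw [Real.sqrt_mul (sq_nonneg _), Real.sqrt_sq (spec_nonneg A)]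

end StmtTwo
namespace StmtTwo
open Module
variable {m n p q : ℕ}

lemma exists_projection (K : Submodule ℝ (EuclideanSpace ℝ (Fin p))) :
    ∃ P : Matrix (Fin p) (Fin p) ℝ, Pᵀ = P ∧ P * P = P ∧
      P.trace = (finrank ℝ K : ℝ) ∧
      (∀ w : Fin p → ℝ, ev w ∈ K → P *ᵥ w = w) ∧
      (∀ w : Fin p → ℝ, ev (P *ᵥ w) ∈ K) := by
  classical
  set d := finrank ℝ K with hd
  let b : OrthonormalBasis (Fin d) ℝ K := stdOrthonormalBasis ℝ K
  let A : Matrix (Fin p) (Fin d) ℝ := fun i k => ((b k : EuclideanSpace ℝ (Fin p)) i)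
  have hAtA : Aᵀ * A = 1 := by
    ext k l
    have := b.orthonormal
    rw [orthonormal_iff_ite] at this
    have hin : (inner ℝ (b k) (b l) : ℝ) = ∑ i, A i k * A i l := by
      rw [Submodule.coe_inner, PiLp.inner_apply]
      simp [A, RCLike.inner_apply]
      exact Finset.sum_congr rfl fun x _ => mul_comm _ _
    have h2 := this k l
    rw [hin] at h2
    rw [Matrix.mul_apply]
    simp only [Matrix.transpose_apply, Matrix.one_apply]
    rw [h2]
  have mulVec_eq : ∀ (w : Fin p → ℝ) (i : Fin p),
      ((A * Aᵀ) *ᵥ w) i = ∑ k, (∑ j, A j k * w j) * A i k := by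
    intro w i
    simp only [Matrix.mulVec, dotProduct, Matrix.mul_apply, Matrix.transpose_apply,
      Finset.sum_mul]
    rw [Finset.sum_comm]
    refine Finset.sum_congr rfl fun k _ => Finset.sum_congr rfl fun j _ => ?_
    ring
  refine ⟨A * Aᵀ, ?_, ?_, ?_, ?_, ?_⟩
  · rw [Matrix.transpose_mul, Matrix.transpose_transpose]
  · rw [Matrix.mul_assoc, ← Matrix.mul_assoc Aᵀ A Aᵀ, hAtA, Matrix.one_mul]
  · rw [Matrix.trace_mul_comm, hAtA, Matrix.trace_one]
    simp
  · intro w hv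
    set v : EuclideanSpace ℝ (Fin p) := ev w with hvdef
    set v' : K := ⟨v, hv⟩ with hv'
    have hinn : ∀ k, (inner ℝ (b k) v' : ℝ) = ∑ j, A j k * v j := by
      intro k
      rw [Submodule.coe_inner, PiLp.inner_apply]
      simp [A, RCLike.inner_apply]
      exact Finset.sum_congr rfl fun x _ => mul_comm _ _
    have hrepr : ∀ i, v i = ∑ k, (inner ℝ (b k) v' : ℝ) * A i k := by
      intro i
      have h1 : (∑ k, (inner ℝ (b k) v' : ℝ) • (b k) : K) = v' := by
        refine Eq.trans ?_ (b.sum_repr v')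
        exact Finset.sum_congr rfl fun k _ => by rw [b.repr_apply_apply]
      have h2 := congrArg (fun x : K => (x : EuclideanSpace ℝ (Fin p)) i) h1
      simp only [Submodule.coe_sum, Submodule.coe_smul] at h2
      rw [← h2, WithLp.ofLp_sum, Finset.sum_apply]
      exact Finset.sum_congr rfl fun k _ => by simp [A, smul_eq_mul]
    funext i
    rw [mulVec_eq]
    have e2 : w i = v i := rfl
    have e3 : ∀ k, (∑ j, A j k * w j) = ∑ j, A j k * v j := fun k => rfl
    rw [e2, hrepr i]
    exact Finset.sum_congr rfl fun k _ => by rw [e3 k, hinn k]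
  · intro w
    set c : Fin d → ℝ := fun k => ∑ j, A j k * w j with hc
    set x' : K := ∑ k, c k • b k with hx'
    have hx : (x' : EuclideanSpace ℝ (Fin p)) = ev ((A * Aᵀ) *ᵥ w) := by
      rw [hx']
      ext i
      have hcoe : ((((∑ k, c k • b k : K)) : EuclideanSpace ℝ (Fin p)) i)
          = ∑ k, c k * A i k := by
        rw [Submodule.coe_sum, WithLp.ofLp_sum, Finset.sum_apply]
        exact Finset.sum_congr rfl fun k _ => by simp [A, smul_eq_mul]
      rw [hcoe]
      have : ev ((A * Aᵀ) *ᵥ w) i = ((A * Aᵀ) *ᵥ w) i := rfl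
      rw [this, mulVec_eq]
    rw [← hx]
    exact SetLike.coe_mem _

end StmtTwo
namespace StmtTwo
variable {m n p q : ℕ}

lemma sum_ite_lt_range (M N : ℕ) (g : ℕ → ℝ) :
    ∑ v ∈ Finset.range M, (if v < N then g v else 0) = ∑ v ∈ Finset.range (min M N), g v := by
  rw [← Finset.sum_filter]
  apply Finset.sum_congr _ (fun _ _ => rfl)
  ext a
  simp [Nat.lt_min]

lemma rearrange (σ : ℕ → ℝ) (hσ0 : ∀ i, 0 ≤ σ i) (hmono : ∀ i j, i ≤ j → σ j ≤ σ i)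
    (M r : ℕ) (t : ℕ → ℝ) (ht0 : ∀ v, v < M → 0 ≤ t v) (ht1 : ∀ v, v < M → t v ≤ 1)
    (hts : ∑ v ∈ Finset.range M, t v ≤ (r : ℝ)) :
    ∑ v ∈ Finset.range M, σ v ^ 2 * t v ≤ ∑ v ∈ Finset.range r, σ v ^ 2 := by
  rcases le_or_gt M r with h | h
  · calc ∑ v ∈ Finset.range M, σ v ^ 2 * t v ≤ ∑ v ∈ Finset.range M, σ v ^ 2 := by
          refine Finset.sum_le_sum fun v hv => ?_
          have h1 := ht1 v (Finset.mem_range.mp hv)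
          have h0 := ht0 v (Finset.mem_range.mp hv)
          nlinarith [sq_nonneg (σ v)]
      _ ≤ ∑ v ∈ Finset.range r, σ v ^ 2 :=
          Finset.sum_le_sum_of_subset_of_nonneg (Finset.range_subset_range.mpr h)
            (fun v _ _ => sq_nonneg _)
  · have hsplit : ∑ v ∈ Finset.range r, σ v ^ 2 * t v + ∑ v ∈ Finset.Ico r M, σ v ^ 2 * t v
        = ∑ v ∈ Finset.range M, σ v ^ 2 * t v := by
      rw [Finset.range_eq_Ico, Finset.range_eq_Ico]
      exact Finset.sum_Ico_consecutive _ (Nat.zero_le r) h.le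
    have hsplit2 : ∑ v ∈ Finset.range r, t v + ∑ v ∈ Finset.Ico r M, t v
        = ∑ v ∈ Finset.range M, t v := by
      rw [Finset.range_eq_Ico, Finset.range_eq_Ico]
      exact Finset.sum_Ico_consecutive _ (Nat.zero_le r) h.le
    have h1 : ∑ v ∈ Finset.Ico r M, σ v ^ 2 * t v ≤ σ r ^ 2 * ∑ v ∈ Finset.Ico r M, t v := by
      rw [Finset.mul_sum]
      refine Finset.sum_le_sum fun v hv => ?_
      have hrv := (Finset.mem_Ico.mp hv).1
      have hm := hmono r v hrv
      have h0v := hσ0 v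
      have htv := ht0 v (Finset.mem_Ico.mp hv).2
      have hsq : σ v ^ 2 ≤ σ r ^ 2 := by nlinarith
      exact mul_le_mul_of_nonneg_right hsq htv
    have h3 : σ r ^ 2 * ∑ v ∈ Finset.Ico r M, t v
        ≤ σ r ^ 2 * ((r : ℝ) - ∑ v ∈ Finset.range r, t v) := by
      apply mul_le_mul_of_nonneg_left _ (sq_nonneg _)
      linarith
    have h4 : σ r ^ 2 * ((r : ℝ) - ∑ v ∈ Finset.range r, t v)
        = ∑ v ∈ Finset.range r, σ r ^ 2 * (1 - t v) := by
      rw [← Finset.mul_sum, Finset.sum_sub_distrib, Finset.sum_const, Finset.card_range,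
        nsmul_eq_mul, mul_one]
    have h5 : ∑ v ∈ Finset.range r, (σ v ^ 2 * t v + σ r ^ 2 * (1 - t v))
        ≤ ∑ v ∈ Finset.range r, σ v ^ 2 := by
      refine Finset.sum_le_sum fun v hv => ?_
      have hvr := Finset.mem_range.mp hv
      have hm := hmono v r hvr.le
      have hvM := hvr.trans h
      have h1v := ht1 v hvM
      have h0v := ht0 v hvM
      have hs0 := hσ0 r
      have hsq : σ r ^ 2 ≤ σ v ^ 2 := by nlinarith [hσ0 v]
      have := mul_le_mul_of_nonneg_right hsq (by linarith : (0:ℝ) ≤ 1 - t v)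
      nlinarith
    rw [Finset.sum_add_distrib] at h5
    linarith

def colsq (B : Matrix (Fin p) (Fin m) ℝ) : ℕ → ℝ :=
  fun v => if h : v < m then ∑ i, (B i ⟨v, h⟩) ^ 2 else 0

lemma colsq_nonneg (B : Matrix (Fin p) (Fin m) ℝ) (v : ℕ) : 0 ≤ colsq B v := by
  unfold colsq
  split
  · exact Finset.sum_nonneg fun i _ => sq_nonneg _
  · exact le_refl 0

lemma sum_colsq (B : Matrix (Fin p) (Fin m) ℝ) :
    ∑ v ∈ Finset.range m, colsq B v = fsq B := by
  rw [← Fin.sum_univ_eq_sum_range (fun v => colsq B v) m]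
  unfold fsq
  rw [Finset.sum_comm]
  refine Finset.sum_congr rfl fun l _ => ?_
  unfold colsq
  rw [dif_pos l.isLt]

lemma colsq_le_one (B : Matrix (Fin p) (Fin m) ℝ)
    (hGG : (Bᵀ * B) * (Bᵀ * B) = Bᵀ * B) (v : ℕ) : colsq B v ≤ 1 := by
  unfold colsq
  split
  case isFalse => norm_num
  case isTrue h =>
    set l : Fin m := ⟨v, h⟩
    have hq : ∑ i, (B i l) ^ 2 = (Bᵀ * B) l l := by
      rw [Matrix.mul_apply]
      exact Finset.sum_congr rfl fun i _ => by simp [sq]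
    have hsym : ∀ a b : Fin m, (Bᵀ * B) a b = (Bᵀ * B) b a := by
      intro a b
      rw [Matrix.mul_apply, Matrix.mul_apply]
      exact Finset.sum_congr rfl fun i _ => by simp [mul_comm]
    have hqq : (Bᵀ * B) l l = ∑ k, ((Bᵀ * B) l k) ^ 2 := by
      conv_lhs => rw [← hGG]
      rw [Matrix.mul_apply]
      exact Finset.sum_congr rfl fun k _ => by rw [hsym k l]; ring
    have hge : ((Bᵀ * B) l l) ^ 2 ≤ ∑ k, ((Bᵀ * B) l k) ^ 2 :=
      Finset.single_le_sum (f := fun k => ((Bᵀ * B) l k) ^ 2) (fun k _ => sq_nonneg _)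
        (Finset.mem_univ l)
    have h0 : 0 ≤ (Bᵀ * B) l l := by
      rw [← hq]; exact Finset.sum_nonneg fun i _ => sq_nonneg _
    rw [hq]
    nlinarith [hqq, hge]

end StmtTwo
namespace StmtTwo
variable {m n p q : ℕ}

lemma fsq_mul_S (B : Matrix (Fin p) (Fin m) ℝ) (S : Matrix (Fin m) (Fin n) ℝ) (f : ℕ → ℝ)
    (hS : ∀ i j, S i j = if (i : ℕ) = (j : ℕ) then f i else 0) :
    fsq (B * S) = ∑ v ∈ Finset.range (min m n), f v ^ 2 * colsq B v := by
  have hentry : ∀ (i : Fin p) (j : Fin n),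
      (B * S) i j = if h : (j : ℕ) < m then B i ⟨(j : ℕ), h⟩ * f (j : ℕ) else 0 := by
    intro i j
    rw [Matrix.mul_apply]
    by_cases h : (j : ℕ) < m
    · rw [dif_pos h, Finset.sum_eq_single (⟨(j : ℕ), h⟩ : Fin m)]
      · rw [hS]; simp
      · intro k _ hk
        rw [hS, if_neg, mul_zero]
        simpa [Fin.ext_iff] using hk
      · simp
    · rw [dif_neg h]
      refine Finset.sum_eq_zero fun k _ => ?_
      rw [hS, if_neg, mul_zero]
      intro heq
      exact h (heq ▸ k.isLt)
  have hcol : ∀ j : Fin n, ∑ i, ((B * S) i j) ^ 2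
      = if (j : ℕ) < m then f (j : ℕ) ^ 2 * colsq B (j : ℕ) else 0 := by
    intro j
    by_cases h : (j : ℕ) < m
    · rw [if_pos h]
      unfold colsq
      rw [dif_pos h, Finset.mul_sum]
      refine Finset.sum_congr rfl fun i _ => ?_
      rw [hentry, dif_pos h]; ring
    · rw [if_neg h]
      refine Finset.sum_eq_zero fun i _ => ?_
      rw [hentry, dif_neg h]; norm_num
  have h1 : fsq (B * S) = ∑ j : Fin n,
      (if (j : ℕ) < m then f (j : ℕ) ^ 2 * colsq B (j : ℕ) else 0) := by
    unfold fsq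
    rw [Finset.sum_comm]
    exact Finset.sum_congr rfl fun j _ => hcol j
  rw [h1, Fin.sum_univ_eq_sum_range (fun v => if v < m then f v ^ 2 * colsq B v else 0) n,
    sum_ite_lt_range, Nat.min_comm]

lemma diag_mulVec (D : Matrix (Fin m) (Fin n) ℝ) (f : ℕ → ℝ)
    (hD : ∀ i j, D i j = if (i : ℕ) = (j : ℕ) then f i else 0) (w : Fin n → ℝ) (i : Fin m) :
    (D *ᵥ w) i = if h : (i : ℕ) < n then f (i : ℕ) * w ⟨(i : ℕ), h⟩ else 0 := by
  have e : (D *ᵥ w) i = ∑ k, D i k * w k := by simp [Matrix.mulVec, dotProduct]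
  rw [e]
  by_cases h : (i : ℕ) < n
  · rw [dif_pos h, Finset.sum_eq_single (⟨(i : ℕ), h⟩ : Fin n)]
    · rw [hD]; simp
    · intro k _ hk
      rw [hD, if_neg, zero_mul]
      simpa [Fin.ext_iff, eq_comm] using hk
    · simp
  · rw [dif_neg h]
    refine Finset.sum_eq_zero fun k _ => ?_
    rw [hD, if_neg, zero_mul]
    intro heq
    exact h (heq ▸ k.isLt)

/-- extension of a `Fin n` vector to `ℕ` -/
def hat (w : Fin n → ℝ) : ℕ → ℝ := fun v => if h : v < n then w ⟨v, h⟩ else 0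

lemma sum_sq_hat (w : Fin n → ℝ) :
    ∑ v ∈ Finset.range n, (hat w v) ^ 2 = ∑ j, (w j) ^ 2 := by
  rw [← Fin.sum_univ_eq_sum_range (fun v => (hat w v) ^ 2) n]
  refine Finset.sum_congr rfl fun j _ => ?_
  unfold hat
  rw [dif_pos j.isLt]

lemma sum_sq_diag_mulVec (D : Matrix (Fin m) (Fin n) ℝ) (f : ℕ → ℝ)
    (hD : ∀ i j, D i j = if (i : ℕ) = (j : ℕ) then f i else 0) (w : Fin n → ℝ) :
    ∑ i, ((D *ᵥ w) i) ^ 2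
      = ∑ v ∈ Finset.range (min m n), f v ^ 2 * (hat w v) ^ 2 := by
  have h1 : ∀ i : Fin m, ((D *ᵥ w) i) ^ 2
      = if (i : ℕ) < n then f (i : ℕ) ^ 2 * (hat w (i : ℕ)) ^ 2 else 0 := by
    intro i
    rw [diag_mulVec D f hD]
    by_cases h : (i : ℕ) < n
    · rw [dif_pos h, if_pos h]
      unfold hat
      rw [dif_pos h]; ring
    · rw [dif_neg h, if_neg h]; norm_num
  calc ∑ i, ((D *ᵥ w) i) ^ 2
      = ∑ i : Fin m, (fun v => if v < n then f v ^ 2 * (hat w v) ^ 2 else 0) (i : ℕ) :=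
        Finset.sum_congr rfl fun i _ => h1 i
    _ = ∑ v ∈ Finset.range m, (if v < n then f v ^ 2 * (hat w v) ^ 2 else 0) :=
        Fin.sum_univ_eq_sum_range (fun v => if v < n then f v ^ 2 * (hat w v) ^ 2 else 0) m
    _ = ∑ v ∈ Finset.range (min m n), f v ^ 2 * (hat w v) ^ 2 := sum_ite_lt_range _ _ _

lemma sum_sq_diag_mulVec_le (D : Matrix (Fin m) (Fin n) ℝ) (f : ℕ → ℝ)
    (hD : ∀ i j, D i j = if (i : ℕ) = (j : ℕ) then f i else 0) (w : Fin n → ℝ)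
    {c : ℝ} (hf : ∀ v, f v ^ 2 ≤ c ^ 2) :
    ∑ i, ((D *ᵥ w) i) ^ 2 ≤ c ^ 2 * ∑ j, (w j) ^ 2 := by
  rw [sum_sq_diag_mulVec D f hD, ← sum_sq_hat, Finset.mul_sum]
  calc ∑ v ∈ Finset.range (min m n), f v ^ 2 * (hat w v) ^ 2
      ≤ ∑ v ∈ Finset.range (min m n), c ^ 2 * (hat w v) ^ 2 :=
        Finset.sum_le_sum fun v _ => mul_le_mul_of_nonneg_right (hf v) (sq_nonneg _)
    _ ≤ ∑ v ∈ Finset.range n, c ^ 2 * (hat w v) ^ 2 := by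
        refine Finset.sum_le_sum_of_subset_of_nonneg
          (Finset.range_subset_range.mpr (Nat.min_le_right m n)) fun v _ _ => ?_
        have := sq_nonneg c
        have := sq_nonneg (hat w v)
        positivity

lemma spec_symIdem_mul_le (P : Matrix (Fin m) (Fin m) ℝ) (hPt : Pᵀ = P) (hPP : P * P = P)
    (M : Matrix (Fin m) (Fin n) ℝ) : specNorm (P * M) ≤ specNorm M := by
  refine specNorm_le_bound _ (spec_nonneg M) fun v => ?_
  rw [← Matrix.mulVec_mulVec]
  calc ‖ev (P *ᵥ (M *ᵥ v))‖ ≤ ‖ev (M *ᵥ v)‖ := by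
        rw [norm_ev, norm_ev]
        exact Real.sqrt_le_sqrt (symIdem_mulVec_sq_le P hPt hPP _)
    _ ≤ specNorm M * ‖ev v‖ := mulVec_norm_le M v

end StmtTwo

namespace StmtTwo
variable {m n p q : ℕ}

lemma col_eq_mulVec_single (M : Matrix (Fin m) (Fin n) ℝ) (j : Fin n) :
    M *ᵥ Pi.single j 1 = fun i => M i j := by
  rw [Matrix.mulVec_single]
  funext i
  simp

lemma fsq_diag (D : Matrix (Fin m) (Fin n) ℝ) (f : ℕ → ℝ)
    (hD : ∀ i j, D i j = if (i : ℕ) = (j : ℕ) then f i else 0) :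
    fsq D = ∑ v ∈ Finset.range (min m n), f v ^ 2 := by
  have h := fsq_mul_S (1 : Matrix (Fin m) (Fin m) ℝ) D f hD
  rw [Matrix.one_mul] at h
  rw [h]
  refine Finset.sum_congr rfl fun v hv => ?_
  have hvm : v < m := lt_of_lt_of_le (Finset.mem_range.mp hv) (Nat.min_le_left m n)
  have : colsq (1 : Matrix (Fin m) (Fin m) ℝ) v = 1 := by
    unfold colsq
    rw [dif_pos hvm, Finset.sum_eq_single (⟨v, hvm⟩ : Fin m)]
    · simp [Matrix.one_apply]
    · intro k _ hk
      simp [Matrix.one_apply, hk]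
    · simp
  rw [this, mul_one]

end StmtTwo
open StmtTwo Module in
set_option maxHeartbeats 2000000 in
/-- if `Y = X + E` with `rank X = r` and `U` consists of the top `r`
left singular vectors of `Y` (given via a full SVD of `Y` with decreasingly sorted
singular values), then `‖(I−UUᵀ)X‖_F ≤ 2‖E‖_F` and `‖(I−UUᵀ)X‖_F ≤ 2√r·‖E‖`. -/
theorem stmt_2 (m n r : ℕ) (hr : r ≤ m)
    (X Y E : Matrix (Fin m) (Fin n) ℝ)
    (hY : Y = X + E) (hrank : X.rank = r)
    (Uf : Matrix (Fin m) (Fin m) ℝ) (Vf : Matrix (Fin n) (Fin n) ℝ)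
    (hUf : Ufᵀ * Uf = 1) (hVf : Vfᵀ * Vf = 1)
    (σ : ℕ → ℝ) (hσ0 : ∀ i, 0 ≤ σ i) (hσmono : ∀ i j, i ≤ j → σ j ≤ σ i)
    (S : Matrix (Fin m) (Fin n) ℝ)
    (hS : ∀ i j, S i j = if (i : ℕ) = (j : ℕ) then σ i else 0)
    (hSVD : Y = Uf * S * Vfᵀ)
    (U : Matrix (Fin m) (Fin r) ℝ)
    (hU : ∀ (i : Fin m) (k : Fin r), U i k = Uf i (Fin.castLE hr k)) :
    frobNorm ((1 - U * Uᵀ) * X) ≤ 2 * frobNorm E ∧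
    frobNorm ((1 - U * Uᵀ) * X) ≤ 2 * Real.sqrt r * specNorm E := by
  classical
  have hUfUf : Uf * Ufᵀ = 1 := mul_eq_one_comm.mp hUf
  have hVfVf : Vf * Vfᵀ = 1 := mul_eq_one_comm.mp hVf
  have hrn : r ≤ n := hrank ▸ X.rank_le_width
  have hrmn : r ≤ min m n := le_min hr hrn
  -- U has orthonormal columns
  have hUtU : Uᵀ * U = 1 := by
    ext k l
    have h1 : (Uᵀ * U) k l = ∑ i, Uf i (Fin.castLE hr k) * Uf i (Fin.castLE hr l) := by
      rw [Matrix.mul_apply]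
      exact Finset.sum_congr rfl fun i _ => by rw [Matrix.transpose_apply, hU, hU]
    have h2 : (Ufᵀ * Uf) (Fin.castLE hr k) (Fin.castLE hr l)
        = ∑ i, Uf i (Fin.castLE hr k) * Uf i (Fin.castLE hr l) := by
      rw [Matrix.mul_apply]
      exact Finset.sum_congr rfl fun i _ => by rw [Matrix.transpose_apply]
    rw [h1, ← h2, hUf]
    simp [Matrix.one_apply, Fin.ext_iff]
  have hP0t : (1 - U * Uᵀ)ᵀ = 1 - U * Uᵀ := by
    rw [Matrix.transpose_sub, Matrix.transpose_one, Matrix.transpose_mul,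
      Matrix.transpose_transpose]
  have hP0P0 : (1 - U * Uᵀ) * (1 - U * Uᵀ) = 1 - U * Uᵀ := by
    have h3 : U * Uᵀ * (U * Uᵀ) = U * Uᵀ := by
      rw [Matrix.mul_assoc, ← Matrix.mul_assoc Uᵀ U Uᵀ, hUtU, Matrix.one_mul]
    rw [Matrix.sub_mul, Matrix.mul_sub, Matrix.mul_sub, Matrix.one_mul, Matrix.mul_one, h3]
    abel_nf
    simp
  -- the tail diagonal matrix
  set g : ℕ → ℝ := fun v => if r ≤ v then σ v else 0 with hg
  set S' : Matrix (Fin m) (Fin n) ℝ :=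
    Matrix.of (fun i j => if (i : ℕ) = (j : ℕ) then g (i : ℕ) else 0) with hS'def
  have hS'entry : ∀ (i : Fin m) (j : Fin n),
      S' i j = if (i : ℕ) = (j : ℕ) then g (i : ℕ) else 0 := fun i j => rfl
  have hP0Y : (1 - U * Uᵀ) * Y = Uf * S' * Vfᵀ := by
    set M : Matrix (Fin r) (Fin n) ℝ :=
      Matrix.of (fun (k : Fin r) (j : Fin n) =>
        if (k : ℕ) = (j : ℕ) then σ (k : ℕ) else 0) with hM
    have hMentry : ∀ (k : Fin r) (j : Fin n),
        M k j = if (k : ℕ) = (j : ℕ) then σ (k : ℕ) else 0 := fun k j => rfl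
    have hKS : (Uᵀ * Uf) * S = M := by
      have hK : Uᵀ * Uf = Matrix.of (fun (k : Fin r) (j : Fin m) =>
          if (k : ℕ) = (j : ℕ) then (1 : ℝ) else 0) := by
        ext k j
        have h1 : (Uᵀ * Uf) k j = ∑ i, Ufᵀ (Fin.castLE hr k) i * Uf i j := by
          rw [Matrix.mul_apply]
          exact Finset.sum_congr rfl fun i _ => by
            rw [Matrix.transpose_apply, Matrix.transpose_apply, hU]
        rw [h1, ← Matrix.mul_apply, hUf]
        simp [Matrix.one_apply, Fin.ext_iff]
      rw [hK]
      ext k j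
      rw [Matrix.mul_apply, Finset.sum_eq_single (Fin.castLE hr k)]
      · have e1 : Matrix.of (fun (k : Fin r) (j : Fin m) =>
            if (k : ℕ) = (j : ℕ) then (1 : ℝ) else 0) k (Fin.castLE hr k) = 1 := by
          simp
        rw [e1, one_mul, hS, hMentry]
        simp
      · intro l _ hl
        have e2 : Matrix.of (fun (k : Fin r) (j : Fin m) =>
            if (k : ℕ) = (j : ℕ) then (1 : ℝ) else 0) k l = 0 := by
          have : ¬((k : ℕ) = (l : ℕ)) := by
            intro hkl
            exact hl (Fin.ext (by simp [hkl]))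
          simp [this]
        rw [e2, zero_mul]
      · simp
    have hSsub : ∀ (l : Fin m) (j : Fin n), (S - S') l j
        = if ((l : ℕ) = (j : ℕ) ∧ (l : ℕ) < r) then σ (l : ℕ) else 0 := by
      intro l j
      rw [Matrix.sub_apply, hS, hS'entry]
      rcases eq_or_ne ((l : ℕ) : ℕ) ((j : ℕ) : ℕ) with h | h
      · rw [show ((l : ℕ)) = ((j : ℕ)) from h] at *
        by_cases h2 : r ≤ (j : ℕ)
        · simp [h, hg, h2, Nat.not_lt.mpr h2]
        · simp [h, hg, h2, Nat.lt_of_not_le h2]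
      · simp [h]
    have haveL : ∀ (i : Fin m) (j : Fin n), (U * M) i j
        = if h : (j : ℕ) < r then Uf i ⟨(j : ℕ), lt_of_lt_of_le h hr⟩ * σ (j : ℕ) else 0 := by
      intro i j
      rw [Matrix.mul_apply]
      by_cases h : (j : ℕ) < r
      · rw [dif_pos h, Finset.sum_eq_single (⟨(j : ℕ), h⟩ : Fin r)]
        · rw [hMentry, hU]
          simp
        · intro k _ hk
          rw [hMentry, if_neg, mul_zero]
          intro hkj
          exact hk (Fin.ext hkj)
        · simp
      · rw [dif_neg h]
        refine Finset.sum_eq_zero fun k _ => ?_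
        rw [hMentry, if_neg, mul_zero]
        intro hkj
        exact h (hkj ▸ k.isLt)
    have haveR : ∀ (i : Fin m) (j : Fin n), (Uf * (S - S')) i j
        = if h : (j : ℕ) < r then Uf i ⟨(j : ℕ), lt_of_lt_of_le h hr⟩ * σ (j : ℕ) else 0 := by
      intro i j
      rw [Matrix.mul_apply]
      by_cases h : (j : ℕ) < r
      · have hjm : (j : ℕ) < m := lt_of_lt_of_le h hr
        rw [dif_pos h, Finset.sum_eq_single (⟨(j : ℕ), hjm⟩ : Fin m)]
        · rw [hSsub]
          simp [h]
        · intro l _ hl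
          rw [hSsub, if_neg, mul_zero]
          intro hcon
          exact hl (Fin.ext hcon.1)
        · simp
      · rw [dif_neg h]
        refine Finset.sum_eq_zero fun l _ => ?_
        rw [hSsub, if_neg, mul_zero]
        intro hcon
        exact h (hcon.1 ▸ hcon.2)
    have hUKS : U * M = Uf * (S - S') := by
      ext i j
      rw [haveL, haveR]
    have hUUY : U * Uᵀ * Y = Uf * (S - S') * Vfᵀ := by
      rw [hSVD]
      calc U * Uᵀ * (Uf * S * Vfᵀ) = (U * ((Uᵀ * Uf) * S)) * Vfᵀ := by
            simp only [Matrix.mul_assoc]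
        _ = (Uf * (S - S')) * Vfᵀ := by rw [hKS, hUKS]
    rw [Matrix.sub_mul, Matrix.one_mul, hUUY, hSVD, ← Matrix.sub_mul]
    congr 1
    rw [← Matrix.mul_sub, sub_sub_cancel]
  have hfsqP0Y : fsq ((1 - U * Uᵀ) * Y)
      = (∑ v ∈ Finset.range (min m n), σ v ^ 2) - ∑ v ∈ Finset.range r, σ v ^ 2 := by
    rw [hP0Y, fsq_mul_orth _ Vfᵀ (by rw [Matrix.transpose_transpose]; exact hVf),
      fsq_orth_mul Uf hUf S', fsq_diag S' g hS'entry]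
    have e1 : ∀ v, g v ^ 2 = σ v ^ 2 - (if v < r then σ v ^ 2 else 0) := by
      intro v
      rcases le_or_gt r v with h | h
      · rw [hg]; simp [h, Nat.not_lt.mpr h]
      · rw [hg]; simp [Nat.not_le.mpr h, h]
    rw [Finset.sum_congr rfl fun v _ => e1 v, Finset.sum_sub_distrib, sum_ite_lt_range,
      Nat.min_eq_right hrmn]
  -- the projection Q onto the complement of the column space of X
  have hcolproj : ∃ Q : Matrix (Fin m) (Fin m) ℝ, Qᵀ = Q ∧ Q * Q = Q ∧
      Q.trace = (m : ℝ) - r ∧ Q * X = 0 := by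
    set Kc : Submodule ℝ (EuclideanSpace ℝ (Fin m)) :=
      Submodule.map ((WithLp.linearEquiv 2 ℝ (Fin m → ℝ)).symm : (Fin m → ℝ) →ₗ[ℝ] _)
        (LinearMap.range X.mulVecLin) with hKc
    obtain ⟨P, hPt, hPP, hPtr, hPfix, hPmem⟩ := exists_projection Kc
    have hfr : finrank ℝ Kc = r := by
      rw [hKc, LinearEquiv.finrank_map_eq]
      exact hrank
    refine ⟨1 - P, ?_, ?_, ?_, ?_⟩
    · rw [Matrix.transpose_sub, Matrix.transpose_one, hPt]
    · rw [Matrix.sub_mul, Matrix.mul_sub, Matrix.mul_sub, Matrix.one_mul, Matrix.mul_one, hPP]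
      abel_nf
      simp
    · rw [Matrix.trace_sub, Matrix.trace_one, hPtr, hfr]
      simp
    · have hPX : P * X = X := by
        ext i j
        have hcol : ev (fun k => X k j) ∈ Kc := by
          refine ⟨fun k => X k j, ?_, rfl⟩
          exact ⟨Pi.single j 1, by rw [Matrix.mulVecLin_apply, col_eq_mulVec_single]⟩
        have h2 := congrFun (hPfix (fun k => X k j) hcol) i
        have e1 : (P *ᵥ fun k => X k j) i = (P * X) i j := by
          simp [Matrix.mulVec, dotProduct, Matrix.mul_apply]
        rw [← e1, h2]
      rw [Matrix.sub_mul, Matrix.one_mul, hPX, sub_self]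
  obtain ⟨Q, hQt, hQQ, hQtr, hQX⟩ := hcolproj
  have hQY : Q * Y = Q * E := by rw [hY, Matrix.mul_add, hQX, zero_add]
  -- Eckart-Young step
  have hEY : fsq ((1 - U * Uᵀ) * Y) ≤ fsq (Q * Y) := by
    have hQYf : fsq (Q * Y) = ∑ v ∈ Finset.range (min m n), σ v ^ 2 * colsq (Q * Uf) v := by
      rw [hSVD]
      have e : Q * (Uf * S * Vfᵀ) = ((Q * Uf) * S) * Vfᵀ := by
        simp only [Matrix.mul_assoc]
      rw [e, fsq_mul_orth _ Vfᵀ (by rw [Matrix.transpose_transpose]; exact hVf),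
        fsq_mul_S (Q * Uf) S σ hS]
    have hBG : ((Q * Uf)ᵀ * (Q * Uf)) * ((Q * Uf)ᵀ * (Q * Uf)) = (Q * Uf)ᵀ * (Q * Uf) := by
      have hQQUf : Q * (Q * Uf) = Q * Uf := by rw [← Matrix.mul_assoc, hQQ]
      have e1 : (Q * Uf)ᵀ * (Q * Uf) = Ufᵀ * (Q * Uf) := by
        rw [Matrix.transpose_mul, hQt, Matrix.mul_assoc, hQQUf]
      rw [e1]
      calc (Ufᵀ * (Q * Uf)) * (Ufᵀ * (Q * Uf))
          = Ufᵀ * (Q * ((Uf * Ufᵀ) * (Q * Uf))) := by simp only [Matrix.mul_assoc]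
        _ = Ufᵀ * (Q * (Q * Uf)) := by rw [hUfUf, Matrix.one_mul]
        _ = Ufᵀ * (Q * Uf) := by rw [hQQUf]
    have hcolsum : ∑ v ∈ Finset.range m, colsq (Q * Uf) v = (m : ℝ) - r := by
      rw [sum_colsq, fsq_mul_orth Q Uf hUfUf, fsq_eq_trace, hQt, hQQ, hQtr]
    have hcore : ∑ v ∈ Finset.range m, σ v ^ 2 * (1 - colsq (Q * Uf) v)
        ≤ ∑ v ∈ Finset.range r, σ v ^ 2 := by
      refine rearrange σ hσ0 hσmono m r (fun v => 1 - colsq (Q * Uf) v)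
        (fun v hv => by have := colsq_le_one (Q * Uf) hBG v; simp; linarith)
        (fun v hv => by have := colsq_nonneg (Q * Uf) v; simp; linarith) ?_
      rw [Finset.sum_sub_distrib, Finset.sum_const, Finset.card_range, nsmul_eq_mul, mul_one,
        hcolsum]
      linarith
    have h1 : ∑ v ∈ Finset.range (min m n), σ v ^ 2 * (1 - colsq (Q * Uf) v)
        ≤ ∑ v ∈ Finset.range m, σ v ^ 2 * (1 - colsq (Q * Uf) v) := by
      refine Finset.sum_le_sum_of_subset_of_nonneg
        (Finset.range_subset_range.mpr (Nat.min_le_left m n)) fun v _ _ => ?_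
      have h2 := colsq_le_one (Q * Uf) hBG v
      have h3 := sq_nonneg (σ v)
      nlinarith
    have h2 : ∑ v ∈ Finset.range (min m n), σ v ^ 2 * (1 - colsq (Q * Uf) v)
        = ∑ v ∈ Finset.range (min m n), σ v ^ 2
          - ∑ v ∈ Finset.range (min m n), σ v ^ 2 * colsq (Q * Uf) v := by
      rw [← Finset.sum_sub_distrib]
      exact Finset.sum_congr rfl fun v _ => by ring
    rw [hQYf, hfsqP0Y]
    linarith
  -- PART 1
  have part1 : frobNorm ((1 - U * Uᵀ) * X) ≤ 2 * frobNorm E := by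
    have t1 : frobNorm ((1 - U * Uᵀ) * X)
        ≤ frobNorm ((1 - U * Uᵀ) * Y) + frobNorm ((1 - U * Uᵀ) * E) := by
      have : (1 - U * Uᵀ) * X = (1 - U * Uᵀ) * Y - (1 - U * Uᵀ) * E := by
        rw [hY, Matrix.mul_add]; abel
      rw [this]
      exact frob_sub_le _ _
    have t2 : frobNorm ((1 - U * Uᵀ) * E) ≤ frobNorm E :=
      frob_le_frob (fsq_symIdem_mul_le _ hP0t hP0P0 E)
    have t3 : frobNorm ((1 - U * Uᵀ) * Y) ≤ frobNorm E := by
      refine le_trans (frob_le_frob hEY) ?_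
      rw [hQY]
      exact frob_le_frob (fsq_symIdem_mul_le Q hQt hQQ E)
    linarith
  -- the projection Π onto the row space of X
  have hrowproj : ∃ Pi' : Matrix (Fin n) (Fin n) ℝ, Pi'ᵀ = Pi' ∧ Pi' * Pi' = Pi' ∧
      Pi'.trace = (r : ℝ) ∧ X * Pi' = X := by
    set Kk : Submodule ℝ (EuclideanSpace ℝ (Fin n)) :=
      Submodule.map ((WithLp.linearEquiv 2 ℝ (Fin n → ℝ)).symm : (Fin n → ℝ) →ₗ[ℝ] _)
        (LinearMap.ker X.mulVecLin) with hKk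
    obtain ⟨N, hNt, hNN, hNtr, hNfix, hNmem⟩ := exists_projection Kk
    have hker : finrank ℝ Kk = n - r := by
      rw [hKk, LinearEquiv.finrank_map_eq]
      have h1 := LinearMap.finrank_range_add_finrank_ker X.mulVecLin
      rw [Module.finrank_fin_fun] at h1
      have h2 : finrank ℝ (LinearMap.range X.mulVecLin) = r := hrank
      omega
    refine ⟨1 - N, ?_, ?_, ?_, ?_⟩
    · rw [Matrix.transpose_sub, Matrix.transpose_one, hNt]
    · rw [Matrix.sub_mul, Matrix.mul_sub, Matrix.mul_sub, Matrix.one_mul, Matrix.mul_one, hNN]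
      abel_nf
      simp
    · rw [Matrix.trace_sub, Matrix.trace_one, hNtr, hker, Nat.cast_sub hrn, Fintype.card_fin]
      ring
    · have hXN : X * N = 0 := by
        ext i j
        obtain ⟨w, hw, hww⟩ := hNmem (Pi.single j 1)
        have hwe : w = N *ᵥ Pi.single j 1 := by
          apply_fun (WithLp.equiv 2 (Fin n → ℝ)) at hww
          simpa [ev] using hww
        have hX0 : X *ᵥ (N *ᵥ Pi.single j 1) = 0 := by
          rw [← hwe]
          have := LinearMap.mem_ker.mp hw
          rwa [Matrix.mulVecLin_apply] at this
        have e1 : (X *ᵥ (N *ᵥ Pi.single j 1)) i = (X * N) i j := by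
          rw [col_eq_mulVec_single]
          simp [Matrix.mulVec, dotProduct, Matrix.mul_apply]
        rw [← e1, hX0]
        simp
      rw [Matrix.mul_sub, Matrix.mul_one, hXN, sub_zero]
  obtain ⟨Pi', hPit, hPiPi, hPitr, hXPi⟩ := hrowproj
  -- spectral bound on the tail
  have hspecP0Y : specNorm ((1 - U * Uᵀ) * Y) ≤ specNorm E := by
    by_cases hcase : r < m ∧ r < n
    case neg =>
      have hS'0 : S' = 0 := by
        ext i j
        rw [hS'entry]
        by_cases h : (i : ℕ) = (j : ℕ)
        · rw [if_pos h, hg]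
          by_cases h2 : r ≤ (i : ℕ)
          · exact absurd ⟨lt_of_le_of_lt h2 i.isLt, lt_of_le_of_lt (h ▸ h2) j.isLt⟩ hcase
          · simp [h2]
        · simp [h]
      rw [hP0Y, hS'0, Matrix.mul_zero, Matrix.zero_mul, spec_zero]
      exact spec_nonneg E
    case pos =>
      obtain ⟨hrm, hrnlt⟩ := hcase
      have hstep1 : specNorm ((1 - U * Uᵀ) * Y) ≤ σ r := by
        rw [hP0Y]
        refine specNorm_le_bound _ (hσ0 r) fun v => ?_
        have e : (Uf * S' * Vfᵀ) *ᵥ v = Uf *ᵥ (S' *ᵥ (Vfᵀ *ᵥ v)) := by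
          rw [← Matrix.mulVec_mulVec, ← Matrix.mulVec_mulVec]
        rw [e, norm_ev, norm_ev, orth_mulVec_sq Uf hUf]
        have hg2 : ∀ v', g v' ^ 2 ≤ σ r ^ 2 := by
          intro v'
          rw [hg]
          by_cases h : r ≤ v'
          · simp only [h, if_true]
            have h1 := hσmono r v' h
            have h2 := hσ0 v'
            nlinarith [hσ0 r]
          · simp only [h, if_false]
            nlinarith [sq_nonneg (σ r)]
        have hb := sum_sq_diag_mulVec_le S' g hS'entry (Vfᵀ *ᵥ v) hg2
        have hVt : ∑ j, ((Vfᵀ *ᵥ v) j) ^ 2 = ∑ j, (v j) ^ 2 :=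
          orth_mulVec_sq Vfᵀ (by rw [Matrix.transpose_transpose]; exact hVfVf) v
        calc Real.sqrt (∑ i, ((S' *ᵥ (Vfᵀ *ᵥ v)) i) ^ 2)
            ≤ Real.sqrt (σ r ^ 2 * ∑ j, (v j) ^ 2) :=
              Real.sqrt_le_sqrt (by rw [← hVt]; exact hb)
          _ = σ r * Real.sqrt (∑ j, (v j) ^ 2) := by
              rw [Real.sqrt_mul (sq_nonneg _), Real.sqrt_sq (hσ0 r)]
      have hstep2 : σ r ≤ specNorm E := by
        set L : (Fin n → ℝ) →ₗ[ℝ] (Fin (n - (r + 1)) → ℝ) :=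
          LinearMap.pi (fun t => (LinearMap.proj
            (⟨r + 1 + (t : ℕ), by have := t.isLt; omega⟩ : Fin n)).comp
            (Vfᵀ).mulVecLin) with hL
        have hkerL : (r + 1) ≤ finrank ℝ (LinearMap.ker L) := by
          have h1 := LinearMap.finrank_range_add_finrank_ker L
          rw [Module.finrank_fin_fun] at h1
          have h2 : finrank ℝ (LinearMap.range L) ≤ n - (r + 1) :=
            le_trans (Submodule.finrank_le _) (le_of_eq (Module.finrank_fin_fun ℝ))
          omega
        have hkerX : finrank ℝ (LinearMap.ker X.mulVecLin) = n - r := by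
          have h1 := LinearMap.finrank_range_add_finrank_ker X.mulVecLin
          rw [Module.finrank_fin_fun] at h1
          have h2 : finrank ℝ (LinearMap.range X.mulVecLin) = r := hrank
          omega
        have hinf : 0 < finrank ℝ
            ((LinearMap.ker L ⊓ LinearMap.ker X.mulVecLin : Submodule ℝ (Fin n → ℝ)) :
              Submodule ℝ (Fin n → ℝ)) := by
          have hsup := Submodule.finrank_sup_add_finrank_inf_eq
            (LinearMap.ker L) (LinearMap.ker X.mulVecLin)
          have hsup2 : finrank ℝ
              ((LinearMap.ker L ⊔ LinearMap.ker X.mulVecLin : Submodule ℝ (Fin n → ℝ)) :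
                Submodule ℝ (Fin n → ℝ)) ≤ n :=
            le_trans (Submodule.finrank_le _) (le_of_eq (Module.finrank_fin_fun ℝ))
          omega
        obtain ⟨w, hw0⟩ := Module.finrank_pos_iff_exists_ne_zero.mp hinf
        set wv : Fin n → ℝ := (w : Fin n → ℝ) with hwv
        have hwmem := w.2
        rw [Submodule.mem_inf] at hwmem
        have hwker : X *ᵥ wv = 0 := by
          have := LinearMap.mem_ker.mp hwmem.2
          rwa [Matrix.mulVecLin_apply] at this
        have hwsupp : ∀ j : Fin n, r < (j : ℕ) → (Vfᵀ *ᵥ wv) j = 0 := by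
          intro j hj
          have hL0 : L wv = 0 := LinearMap.mem_ker.mp hwmem.1
          have ht : (j : ℕ) - (r + 1) < n - (r + 1) := by
            have := j.isLt
            omega
          have h3 := congrFun hL0 ⟨(j : ℕ) - (r + 1), ht⟩
          simp only [hL, LinearMap.pi_apply, LinearMap.comp_apply, LinearMap.proj_apply,
            Matrix.mulVecLin_apply, Pi.zero_apply] at h3
          have hidx : (⟨r + 1 + ((j : ℕ) - (r + 1)), by have := j.isLt; omega⟩ : Fin n) = j := by
            apply Fin.ext
            simp
            omega
          rwa [hidx] at h3
        have hwv0 : wv ≠ 0 := fun hcon => hw0 (Subtype.ext hcon)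
        have hsum_pos : 0 < ∑ j, (wv j) ^ 2 := by
          rcases Function.ne_iff.mp hwv0 with ⟨j0, hj0⟩
          have : (0:ℝ) < (wv j0) ^ 2 := by
            have : wv j0 ≠ 0 := hj0
            positivity
          refine lt_of_lt_of_le this ?_
          exact Finset.single_le_sum (f := fun j => (wv j) ^ 2)
            (fun j _ => sq_nonneg _) (Finset.mem_univ j0)
        have hYw : Y *ᵥ wv = E *ᵥ wv := by
          rw [hY, Matrix.add_mulVec, hwker, zero_add]
        have hlow : σ r ^ 2 * ∑ j, (wv j) ^ 2 ≤ ∑ i, ((Y *ᵥ wv) i) ^ 2 := by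
          have e : Y *ᵥ wv = Uf *ᵥ (S *ᵥ (Vfᵀ *ᵥ wv)) := by
            rw [hSVD, ← Matrix.mulVec_mulVec, ← Matrix.mulVec_mulVec]
          rw [e, orth_mulVec_sq Uf hUf]
          have husum : ∑ j, ((Vfᵀ *ᵥ wv) j) ^ 2 = ∑ j, (wv j) ^ 2 :=
            orth_mulVec_sq Vfᵀ (by rw [Matrix.transpose_transpose]; exact hVfVf) wv
          rw [sum_sq_diag_mulVec S σ hS (Vfᵀ *ᵥ wv)]
          have hhat0 : ∀ v', r < v' → hat (Vfᵀ *ᵥ wv) v' = 0 := by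
            intro v' hv'
            unfold hat
            split
            case isTrue h => exact hwsupp ⟨v', h⟩ hv'
            case isFalse h => rfl
          have htail : ∀ Mx : ℕ, r + 1 ≤ Mx →
              ∑ v' ∈ Finset.range Mx, σ v' ^ 2 * (hat (Vfᵀ *ᵥ wv) v') ^ 2
                = ∑ v' ∈ Finset.range (r + 1), σ v' ^ 2 * (hat (Vfᵀ *ᵥ wv) v') ^ 2 := by
            intro Mx hMx
            symm
            refine Finset.sum_subset (Finset.range_subset_range.mpr hMx) fun x _ hx => ?_
            have hxr : r < x := by
              rcases Nat.lt_or_ge x (r + 1) with h | h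
              · exact absurd (Finset.mem_range.mpr h) hx
              · omega
            rw [hhat0 x hxr]
            ring
          have htail2 : ∀ Mx : ℕ, r + 1 ≤ Mx →
              ∑ v' ∈ Finset.range Mx, (hat (Vfᵀ *ᵥ wv) v') ^ 2
                = ∑ v' ∈ Finset.range (r + 1), (hat (Vfᵀ *ᵥ wv) v') ^ 2 := by
            intro Mx hMx
            symm
            refine Finset.sum_subset (Finset.range_subset_range.mpr hMx) fun x _ hx => ?_
            have hxr : r < x := by
              rcases Nat.lt_or_ge x (r + 1) with h | h
              · exact absurd (Finset.mem_range.mpr h) hx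
              · omega
            rw [hhat0 x hxr]
            ring
          have hr1mn : r + 1 ≤ min m n := by omega
          calc σ r ^ 2 * ∑ j, (wv j) ^ 2
              = σ r ^ 2 * ∑ v' ∈ Finset.range (r + 1), (hat (Vfᵀ *ᵥ wv) v') ^ 2 := by
                rw [← husum, ← sum_sq_hat (Vfᵀ *ᵥ wv), htail2 n (by omega)]
            _ ≤ ∑ v' ∈ Finset.range (r + 1), σ v' ^ 2 * (hat (Vfᵀ *ᵥ wv) v') ^ 2 := by
                rw [Finset.mul_sum]
                refine Finset.sum_le_sum fun v' hv' => ?_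
                have hv'r : v' ≤ r := by
                  have := Finset.mem_range.mp hv'
                  omega
                have h1 := hσmono v' r hv'r
                have h2 := hσ0 r
                have h3 := sq_nonneg (hat (Vfᵀ *ᵥ wv) v')
                have h4 : σ r ^ 2 ≤ σ v' ^ 2 := by nlinarith [hσ0 v']
                exact mul_le_mul_of_nonneg_right h4 h3
            _ = ∑ v' ∈ Finset.range (min m n), σ v' ^ 2 * (hat (Vfᵀ *ᵥ wv) v') ^ 2 :=
                (htail (min m n) hr1mn).symm
        have hup : ∑ i, ((E *ᵥ wv) i) ^ 2 ≤ specNorm E ^ 2 * ∑ j, (wv j) ^ 2 := by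
          have h1 := mulVec_norm_le E wv
          rw [norm_ev, norm_ev] at h1
          have h2 : (Real.sqrt (∑ i, ((E *ᵥ wv) i) ^ 2)) ^ 2
              ≤ (specNorm E * Real.sqrt (∑ j, (wv j) ^ 2)) ^ 2 := by
            apply sq_le_sq' _ h1
            have h3 := Real.sqrt_nonneg (∑ i, ((E *ᵥ wv) i) ^ 2)
            have h4 := mul_nonneg (spec_nonneg E) (Real.sqrt_nonneg (∑ j, (wv j) ^ 2))
            linarith
          rwa [Real.sq_sqrt (Finset.sum_nonneg fun i _ => sq_nonneg _), mul_pow,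
            Real.sq_sqrt (Finset.sum_nonneg fun j _ => sq_nonneg _)] at h2
        have hfinal : σ r ^ 2 ≤ specNorm E ^ 2 := by
          rw [hYw] at hlow
          have h5 := le_trans hlow hup
          exact le_of_mul_le_mul_right (by linarith) hsum_pos
        nlinarith [hσ0 r, spec_nonneg E]
      linarith
  -- PART 2
  have part2 : frobNorm ((1 - U * Uᵀ) * X) ≤ 2 * Real.sqrt r * specNorm E := by
    have hfrobPi : frobNorm Pi' = Real.sqrt r := by
      rw [frob_sqrt_fsq, fsq_eq_trace, hPit, hPiPi, hPitr]
    have t1 : frobNorm ((1 - U * Uᵀ) * X) ≤ specNorm ((1 - U * Uᵀ) * X) * Real.sqrt r := by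
      have e : (1 - U * Uᵀ) * X = ((1 - U * Uᵀ) * X) * Pi' := by
        rw [Matrix.mul_assoc, hXPi]
      calc frobNorm ((1 - U * Uᵀ) * X) = frobNorm (((1 - U * Uᵀ) * X) * Pi') := by rw [← e]
        _ ≤ specNorm ((1 - U * Uᵀ) * X) * frobNorm Pi' := frob_mul_le_spec_mul_frob _ _
        _ = specNorm ((1 - U * Uᵀ) * X) * Real.sqrt r := by rw [hfrobPi]
    have t2 : specNorm ((1 - U * Uᵀ) * X)
        ≤ specNorm ((1 - U * Uᵀ) * Y) + specNorm ((1 - U * Uᵀ) * E) := by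
      have : (1 - U * Uᵀ) * X = (1 - U * Uᵀ) * Y - (1 - U * Uᵀ) * E := by
        rw [hY, Matrix.mul_add]; abel
      rw [this]
      exact spec_sub_le _ _
    have t3 : specNorm ((1 - U * Uᵀ) * E) ≤ specNorm E :=
      spec_symIdem_mul_le _ hP0t hP0P0 E
    have hsq : (0:ℝ) ≤ Real.sqrt r := Real.sqrt_nonneg _
    have hsp : 0 ≤ specNorm E := spec_nonneg E
    calc frobNorm ((1 - U * Uᵀ) * X) ≤ specNorm ((1 - U * Uᵀ) * X) * Real.sqrt r := t1
      _ ≤ (2 * specNorm E) * Real.sqrt r := by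
          apply mul_le_mul_of_nonneg_right _ hsq
          linarith
      _ = 2 * Real.sqrt r * specNorm E := by ring
  exact ⟨part1, part2⟩
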